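/- Let A be a commutative ring, and let B and C be commutative A-algebras. Assume B is a Noetherian unique factorization domain, C is flat and finitely generated as an A-algebra, and for every field K that is an A-algebra, the tensor product K ⊗_A C is a unique factorization domain whose units are exactly the images of the nonzero elements of K. Let K denote the fieldของ fractions of B, so that both K and B ⊗_A C map injectively into K ⊗_A C. Then the intersection of (the image of) K with (the image of) B ⊗_A C inside K ⊗_A C equals (the image of) B: if z ∈ K ⊗_A C lies in the image of the canonical map K → K ⊗_A C and also in the image of the canonical map B ⊗_A C → K ⊗_A C, then z lies in the image of B under the composite B → K → K ⊗_A C. -/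

import Mathlib

open TensorProduct

universe u

/-!
Write `c ∈ K` as a reduced fraction `a / s`. If `c` also comes from `w ∈ B ⊗[A] C`, flatness of
`C` makes `B ⊗[A] C → K ⊗[A] C` injective, so `s * w = a` already in `B ⊗[A] C`. Reducing modulo a
prime `p ∣ s` kills `a` in `(B ⧸ p) ⊗[A] C`; since `B ⧸ p` is a domain whose fraction field `L`
has `L ⊗[A] C` a domain, `B ⧸ p` embeds in `(B ⧸ p) ⊗[A] C`, so `p ∣ a`, contradicting
reducedness. Hence `s` is a unit and `c ∈ B`.
-/

section

variable {A C : Type*} [CommRing A] [CommRing C] [Algebra A C]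

theorem Algebra.TensorProduct.map_id_injective_of_flat [Module.Flat A C]
    {B K : Type*} [CommRing B] [CommRing K] [Algebra A B] [Algebra A K] (f : B →ₐ[A] K)
    (hf : Function.Injective f) :
    Function.Injective (Algebra.TensorProduct.map f (AlgHom.id A C)) :=
  Module.Flat.rTensor_preserves_injective_linearMap (M := C) f.toLinearMap hf

theorem Algebra.TensorProduct.map_algebraMap {B K : Type*} [CommRing B] [CommRing K]
    [Algebra A B] [Algebra A K] (f : B →ₐ[A] K) (b : B) :
    Algebra.TensorProduct.map f (AlgHom.id A C) (algebraMap B (B ⊗[A] C) b) =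
      algebraMap K (K ⊗[A] C) (f b) := by
  simp [Algebra.TensorProduct.algebraMap_apply]

theorem algebraMap_tensorProduct_injective_of_nontrivial (D : Type*) [CommRing D] [IsDomain D]
    [Algebra A D] [Nontrivial (FractionRing D ⊗[A] C)] :
    Function.Injective (algebraMap D (D ⊗[A] C)) := by
  refine (injective_iff_map_eq_zero _).mpr fun x hx ↦ ?_
  by_contra hx0
  let L := FractionRing D
  have hunit : IsUnit (algebraMap L (L ⊗[A] C) (algebraMap D L x)) :=
    (IsFractionRing.to_map_ne_zero_of_mem_nonZeroDivisors
      (mem_nonZeroDivisors_of_ne_zero hx0)).isUnit.map _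
  rw [← IsScalarTower.toAlgHom_apply A D L, ← Algebra.TensorProduct.map_algebraMap, hx,
    map_zero] at hunit
  exact not_isUnit_zero hunit

theorem mem_of_algebraMap_dvd_of_injective {B : Type*} [CommRing B] [Algebra A B] {I : Ideal B}
    (hI : Function.Injective (algebraMap (B ⧸ I) ((B ⧸ I) ⊗[A] C))) {s a : B} (hs : s ∈ I)
    (hdvd : algebraMap B (B ⊗[A] C) s ∣ algebraMap B (B ⊗[A] C) a) : a ∈ I := by
  rw [← Ideal.Quotient.eq_zero_iff_mem]
  refine hI.eq_iff' (map_zero _) |>.mp ?_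
  have := map_dvd (Algebra.TensorProduct.map (Ideal.Quotient.mkₐ A I) (AlgHom.id A C)) hdvd
  simp only [Algebra.TensorProduct.map_algebraMap, Ideal.Quotient.mkₐ_eq_mk,
    Ideal.Quotient.eq_zero_iff_mem.mpr hs, map_zero, zero_dvd_iff] at this
  exact this

theorem isUnit_of_algebraMap_dvd_of_isRelPrime {B : Type*} [CommRing B] [IsDomain B]
    [UniqueFactorizationMonoid B] [Algebra A B]
    (hinj : ∀ p : B, Prime p →
      Function.Injective (algebraMap (B ⧸ Ideal.span {p}) ((B ⧸ Ideal.span {p}) ⊗[A] C)))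
    {s a : B} (hs : s ≠ 0) (hrel : IsRelPrime a s)
    (hdvd : algebraMap B (B ⊗[A] C) s ∣ algebraMap B (B ⊗[A] C) a) : IsUnit s := by
  refine isRelPrime_self.mp <| (UniqueFactorizationMonoid.isRelPrime_iff_no_prime_factors hs).mpr
    fun p hps _ hp ↦ hp.not_isUnit <| hrel ?_ hps
  exact Ideal.mem_span_singleton.mp <|
    mem_of_algebraMap_dvd_of_injective (hinj p hp) (Ideal.mem_span_singleton.mpr hps) hdvd

theorem IsFractionRing.exists_algebraMap_eq_of_algebraMap_mem_range {B K : Type*} [CommRing B]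
    [IsDomain B] [UniqueFactorizationMonoid B] [Algebra A B] [Field K] [Algebra B K]
    [IsFractionRing B K] [Algebra A K] [IsScalarTower A B K] [Module.Flat A C]
    (hinj : ∀ p : B, Prime p →
      Function.Injective (algebraMap (B ⧸ Ideal.span {p}) ((B ⧸ Ideal.span {p}) ⊗[A] C)))
    (c : K) (w : B ⊗[A] C)
    (hw : Algebra.TensorProduct.map (IsScalarTower.toAlgHom A B K) (AlgHom.id A C) w =
      algebraMap K (K ⊗[A] C) c) :
    ∃ b : B, algebraMap B K b = c := by
  obtain ⟨a, s, hrel, rfl⟩ := IsFractionRing.exists_reduced_fraction B c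
  have hdvd : algebraMap B (B ⊗[A] C) s ∣ algebraMap B (B ⊗[A] C) a := by
    refine ⟨w, Algebra.TensorProduct.map_id_injective_of_flat (IsScalarTower.toAlgHom A B K)
      (IsFractionRing.injective B K) ?_⟩
    rw [map_mul, Algebra.TensorProduct.map_algebraMap, Algebra.TensorProduct.map_algebraMap, hw,
      ← map_mul, IsScalarTower.toAlgHom_apply, IsScalarTower.toAlgHom_apply,
      IsLocalization.mk'_spec']
  obtain ⟨u, hu⟩ := isUnit_of_algebraMap_dvd_of_isRelPrime hinj
    (nonZeroDivisors.coe_ne_zero s) hrel hdvd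
  refine ⟨a * ↑u⁻¹, (IsLocalization.eq_mk'_iff_mul_eq).mpr ?_⟩
  rw [← map_mul, ← hu, mul_assoc, Units.inv_mul, mul_one]

end

theorem fractionField_inter_tensor_general (A B C K : Type u) [CommRing A] [CommRing B] [CommRing C]
    [Algebra A B] [Algebra A C]
    [IsDomain B] [UniqueFactorizationMonoid B]
    [Module.Flat A C]
    [Field K] [Algebra B K] [IsFractionRing B K] [Algebra A K] [IsScalarTower A B K]
    (hdom : ∀ (L : Type u) [Field L] [Algebra A L], IsDomain (L ⊗[A] C))
    (z : K ⊗[A] C)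
    (hzK : ∃ c : K, algebraMap K (K ⊗[A] C) c = z)
    (hzBC : ∃ w : B ⊗[A] C,
      (Algebra.TensorProduct.map (IsScalarTower.toAlgHom A B K) (AlgHom.id A C)) w = z) :
    ∃ b : B, algebraMap K (K ⊗[A] C) (algebraMap B K b) = z := by
  obtain ⟨c, rfl⟩ := hzK
  obtain ⟨w, hw⟩ := hzBC
  have hinj (p : B) (hp : Prime p) :
      Function.Injective (algebraMap (B ⧸ Ideal.span {p}) ((B ⧸ Ideal.span {p}) ⊗[A] C)) := by
    have := (Ideal.span_singleton_prime hp.ne_zero).mpr hp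
    have := (hdom (FractionRing (B ⧸ Ideal.span {p}))).toNontrivial
    exact algebraMap_tensorProduct_injective_of_nontrivial _
  obtain ⟨b, rfl⟩ := IsFractionRing.exists_algebraMap_eq_of_algebraMap_mem_range hinj c w hw
  exact ⟨b, rfl⟩

/-- Under the hypotheses of the UFD tensor product proposition, with `K` the fraction field of
`B`, the intersection of the images of `K` and of `B ⊗[A] C` inside `K ⊗[A] C` is the image
of `B`. -/
theorem fractionField_inter_tensor (A B C K : Type u) [CommRing A] [CommRing B] [CommRing C]
    [Algebra A B] [Algebra A C]
    [IsNoetherianRing B] [IsDomain B] [UniqueFactorizationMonoid B]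
    [Module.Flat A C] [Algebra.FiniteType A C]
    [Field K] [Algebra B K] [IsFractionRing B K] [Algebra A K] [IsScalarTower A B K]
    (hdom : ∀ (L : Type u) [Field L] [Algebra A L], IsDomain (L ⊗[A] C))
    (hufd : ∀ (L : Type u) [Field L] [Algebra A L] [IsDomain (L ⊗[A] C)],
      UniqueFactorizationMonoid (L ⊗[A] C))
    (hunits : ∀ (L : Type u) [Field L] [Algebra A L] (z : L ⊗[A] C),
      IsUnit z ↔ ∃ c : L, c ≠ 0 ∧ algebraMap L (L ⊗[A] C) c = z)
    (z : K ⊗[A] C)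
    (hzK : ∃ c : K, algebraMap K (K ⊗[A] C) c = z)
    (hzBC : ∃ w : B ⊗[A] C,
      (Algebra.TensorProduct.map (IsScalarTower.toAlgHom A B K) (AlgHom.id A C)) w = z) :
    ∃ b : B, algebraMap K (K ⊗[A] C) (algebraMap B K b) = z :=
  fractionField_inter_tensor_general A B C K hdom z hzK hzBC
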